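/- Under the thick-edge assumptions: lim_{a→∞} ψ′(a) = (∫ s dμ_Σ(s))/δ > 0; lim_{a→∞} ψ(a) = +∞ and lim_{a ↓ sup supp(μ_T)} ψ(a) = +∞; consequently, the set of critical points of ψ in (sup supp(μ_T), ∞) is nonempty and bounded from above. -/

import Mathlib

open MeasureTheory ProbabilityTheory Filter Topology
open scoped ENNReal NNReal

noncomputable section

namespace SpecGLM

/-- The (topological) support of a measure on `ℝ`. -/
def msupport (μ : Measure ℝ) : Set ℝ := {x | ∀ U ∈ nhds x, μ U ≠ 0}

/-- `k`-th largest eigenvalue (1-indexed) of a real symmetric matrix; junk value `0`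
if the matrix is not symmetric. -/
def lambdaK {d : ℕ} (A : Matrix (Fin d) (Fin d) ℝ) (k : ℕ) : ℝ := by
  classical
  exact if hA : A.IsHermitian then
    (((List.ofFn hA.eigenvalues).insertionSort (· ≥ ·)).getD (k - 1) 0)
  else 0

/-- Empirical distribution of a finite family of real numbers. -/
def esdVec {n : ℕ} (v : Fin n → ℝ) : Measure ℝ :=
  (n : ℝ≥0∞)⁻¹ • ∑ i, Measure.dirac (v i)

/-- Empirical spectral distribution of a real symmetric matrix. -/
def esd {d : ℕ} (A : Matrix (Fin d) (Fin d) ℝ) : Measure ℝ := by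
  classical
  exact if hA : A.IsHermitian then esdVec hA.eigenvalues else 0

/-- Weak convergence of a sequence of measures on `ℝ`. -/
def WeakTendsto (ν : ℕ → Measure ℝ) (ν' : Measure ℝ) : Prop :=
  ∀ f : BoundedContinuousFunction ℝ ℝ,
    Tendsto (fun k => ∫ x, f x ∂(ν k)) atTop (𝓝 (∫ x, f x ∂ν'))

/-- Convergence in probability of a sequence of real random variables to a constant. -/
def TendstoInProbability {Ω : Type*} [MeasurableSpace Ω] (μ : Measure Ω)
    (X : ℕ → Ω → ℝ) (c : ℝ) : Prop :=
  ∀ ε : ℝ, 0 < ε → Tendsto (fun k => μ {ω | ε ≤ |X k ω - c|}) atTop (𝓝 0)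

/-- Almost sure convergence of a sequence of real random variables to a constant. -/
def TendstoAlmostSurely {Ω : Type*} [MeasurableSpace Ω] (μ : Measure Ω)
    (X : ℕ → Ω → ℝ) (c : ℝ) : Prop :=
  ∀ᵐ ω ∂μ, Tendsto (fun k => X k ω) atTop (𝓝 c)

/-- Pseudo-Lipschitz functions of finite order. -/
def PseudoLipschitz (f : ℝ → ℝ) : Prop :=
  ∃ (j : ℕ) (L : ℝ), ∀ x y : ℝ,
    |f x - f y| ≤ L * |x - y| * (1 + |x| ^ (j - 1) + |y| ^ (j - 1))

/-- A finite family of real random variables is i.i.d. with common law `ν`. -/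
def IIDLaw {Ω : Type*} [MeasurableSpace Ω] (μ : Measure Ω) {ι : Type*} [Fintype ι]
    (f : ι → Ω → ℝ) (ν : Measure ℝ) : Prop :=
  (∀ i, Measurable (f i)) ∧ (∀ i, Measure.map (f i) μ = ν) ∧
    iIndepFun f μ

/-- The positive semidefinite square root of a matrix (junk value `0` if not psd). -/
def sqrtMat {d : ℕ} (A : Matrix (Fin d) (Fin d) ℝ) : Matrix (Fin d) (Fin d) ℝ := by
  classical
  exact if hA : A.PosSemidef then
    hA.1.eigenvectorUnitary.1 *
      Matrix.diagonal ((fun x : ℝ => (RCLike.ofReal x : ℝ)) ∘ (Real.sqrt ∘ hA.1.eigenvalues)) *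
      (star hA.1.eigenvectorUnitary : Matrix (Fin d) (Fin d) ℝ)
  else 0

/-- Euclidean norm of a vector. -/
def vnorm {d : ℕ} (v : Fin d → ℝ) : ℝ := Real.sqrt (∑ i, v i ^ 2)

/-- Euclidean inner product. -/
def dot {d : ℕ} (u v : Fin d → ℝ) : ℝ := ∑ i, u i * v i

/-- A probability space bundled as a structure. -/
structure ProbSpace where
  carrier : Type
  inst : MeasurableSpace carrier
  meas : @Measure carrier inst
  prob : @IsProbabilityMeasure carrier inst meas

attribute [instance] ProbSpace.inst ProbSpace.prob

end SpecGLM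
namespace SpecGLM

/-- The complex upper half-plane. -/
def UH : Set ℂ := {z | 0 < z.im}

/-- Meromorphy at a point: some power of `(· - z)` times `f` is analytic at `z`. -/
def MeroAt (f : ℂ → ℂ) (z : ℂ) : Prop :=
  ∃ k : ℕ, AnalyticAt ℂ (fun w => (w - z) ^ k * f w) z

/-- Data for the deterministic random-matrix system: aspect ratio and the limiting
spectral distributions `μ_T`, `μ_Σ`. -/
structure RMT where
  delta : ℝ
  muT : Measure ℝ
  muS : Measure ℝ

namespace RMT

variable (R : RMT)

/-- `sup supp μ_T`. -/
def tauT : ℝ := sSup (msupport R.muT)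

/-- `sup supp μ_Σ`. -/
def sSig : ℝ := sSup (msupport R.muS)

/-- `inf supp μ_Σ`. -/
def iSig : ℝ := sInf (msupport R.muS)

/-- `∫ s dμ_Σ(s)`. -/
def meanS : ℝ := ∫ s, s ∂ R.muS

/-- `c(a) = ∫ t/(a - t) dμ_T(t)`. -/
def cfun (a : ℝ) : ℝ := ∫ t, t / (a - t) ∂ R.muT

/-- The left end `s(a)` of the admissible interval for `γ(a)`. -/
def sfun (a : ℝ) : ℝ :=
  if 0 < R.cfun a then R.cfun a * R.sSig
  else if R.cfun a < 0 then R.cfun a * R.iSig else 0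

/-- `γ(a)` is the unique solution in `(s(a), ∞)` of
`1 = (1/δ) ∫ s/(γ(a) - c(a)s) dμ_Σ(s)`. -/
def IsGammaFun (γ : ℝ → ℝ) : Prop :=
  ∀ a, R.tauT < a →
    R.sfun a < γ a ∧ 1 = (1 / R.delta) * ∫ s, s / (γ a - R.cfun a * s) ∂ R.muS ∧
      ∀ g, R.sfun a < g →
        1 = (1 / R.delta) * ∫ s, s / (g - R.cfun a * s) ∂ R.muS → g = γ a

/-- Basic assumptions on the data. -/
def Basic : Prop :=
  0 < R.delta ∧ IsProbabilityMeasure R.muT ∧ IsProbabilityMeasure R.muS ∧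
    (∃ C : ℝ, msupport R.muT ⊆ Set.Icc (-C) C) ∧
    (∃ l u : ℝ, 0 < l ∧ msupport R.muS ⊆ Set.Icc l u) ∧
    R.muT ≠ Measure.dirac 0 ∧ R.muS ≠ Measure.dirac 0 ∧ 0 < R.tauT

/-- Thick-edge assumptions. -/
def ThickEdge : Prop :=
  Tendsto (fun a => ∫ t, t / (a - t) ∂ R.muT) (𝓝[>] R.tauT) atTop ∧
  Tendsto (fun a => ∫ t, t ^ 2 / (a - t) ^ 2 ∂ R.muT) (𝓝[>] R.tauT) atTop ∧
  Tendsto (fun w => |∫ s, s / (s - w) ∂ R.muS|) (𝓝[>] R.sSig) atTop ∧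
  Tendsto (fun w => ∫ s, s ^ 2 / (s - w) ^ 2 ∂ R.muS) (𝓝[>] R.sSig) atTop ∧
  Tendsto (fun w => ∫ s, s ^ 3 / (s - w) ^ 2 ∂ R.muS) (𝓝[>] R.sSig) atTop ∧
  Tendsto (fun w => |∫ s, s / (s - w) ∂ R.muS|) (𝓝[<] R.iSig) atTop ∧
  Tendsto (fun w => ∫ s, s ^ 2 / (s - w) ^ 2 ∂ R.muS) (𝓝[<] R.iSig) atTop ∧
  Tendsto (fun w => ∫ s, s ^ 3 / (s - w) ^ 2 ∂ R.muS) (𝓝[<] R.iSig) atTop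

/-- The system of equations satisfied by `(m(z), m₁(z), m₂(z))` at `z`. -/
def SystemEqAt (z w w1 w2 : ℂ) : Prop :=
  (-(z * w) = (1 - (R.delta : ℂ)) +
      (R.delta : ℂ) * ∫ t, (1 + w1 * (t : ℂ))⁻¹ ∂ R.muT) ∧
  (-(z * w) = ∫ s, (1 + w2 * (s : ℂ))⁻¹ ∂ R.muS) ∧
  (-(z * w) = 1 + (R.delta : ℂ) * z * w1 * w2)

/-- `(m, m₁, m₂)` is the (unique) solution of the system, subject to
`m(z) ∈ ℍ`, `m₁(z) ∈ ℍ`, `z m₂(z) ∈ ℍ`. -/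
def IsSystemSolution (m m1 m2 : ℂ → ℂ) : Prop :=
  ∀ z ∈ UH,
    m z ∈ UH ∧ m1 z ∈ UH ∧ z * m2 z ∈ UH ∧ R.SystemEqAt z (m z) (m1 z) (m2 z) ∧
    ∀ w w1 w2 : ℂ, w ∈ UH → w1 ∈ UH → z * w2 ∈ UH → R.SystemEqAt z w w1 w2 →
      w = m z ∧ w1 = m1 z ∧ w2 = m2 z

/-- `I₁(z, z̄) = ∫ t²/|1 + m₁(z)t|² dμ_T(t)`. -/
def I1sq (m1 : ℂ → ℂ) (z : ℂ) : ℝ :=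
  ∫ t, t ^ 2 / Complex.normSq (1 + m1 z * (t : ℂ)) ∂ R.muT

/-- `I₂(z, z̄) = ∫ s²/|1 + m₂(z)s|² dμ_Σ(s)`. -/
def I2sq (m2 : ℂ → ℂ) (z : ℂ) : ℝ :=
  ∫ s, s ^ 2 / Complex.normSq (1 + m2 z * (s : ℂ)) ∂ R.muS

end RMT

/-- `m` is the Stieltjes transform of the measure `ν` on `ℝ`. -/
def IsStieltjesOf (ν : Measure ℝ) (m : ℂ → ℂ) : Prop :=
  ∀ z ∈ UH, m z = ∫ x, ((x : ℂ) - z)⁻¹ ∂ν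

end SpecGLM
namespace SpecGLM

/-- `ψ(a) = a γ(a)`. -/
def psifun (γ : ℝ → ℝ) (a : ℝ) : ℝ := a * γ a

end SpecGLM
namespace SpecGLM


/-!
Subtracting the defining equations of `γ` at two points `a, a'` gives, with
`D = γ(a) - c(a) s` and `D' = γ(a') - c(a') s` (bounded below by positive constants on
`supp μ_Σ`),
`(γ(a') - γ(a)) ∫ s / (D D') dμ_Σ = (c(a') - c(a)) ∫ s² / (D D') dμ_Σ`.
Since `0 ≤ s² ≤ u s` on `supp μ_Σ ⊆ (0, u]`, this yields `|γ(a') - γ(a)| ≤ u |c(a') - c(a)|`,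
and letting `a' → a`, `γ' = c' q` with `q ∈ [0, u]`. The pair `(m, 0)`, `m = ∫ s dμ_Σ / δ`,
solves the same equation, so `|γ(a) - m| ≤ u |c(a)| = O(1/a)`; together with `c' = O(1/a²)`
this gives `ψ' = γ + a c' q → m` and `ψ = a γ → ∞`. Near `sup supp μ_T` we have
`γ > c · sup supp μ_Σ` with `c → ∞`. Being continuous on `(sup supp μ_T, ∞)` and tending to `∞`
at both ends, `ψ` has an interior minimum, which is a critical point, and `ψ' → m > 0` bounds
the critical points from above.
-/

open Set

section Support

variable {μ : Measure ℝ}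

lemma msupport_eq_support (μ : Measure ℝ) : msupport μ = μ.support := by
  ext x
  simp [msupport, Measure.mem_support_iff_forall, pos_iff_ne_zero]

lemma ae_mem_of_msupport_subset {s : Set ℝ} (h : msupport μ ⊆ s) : ∀ᵐ x ∂μ, x ∈ s := by
  filter_upwards [msupport_eq_support μ ▸ Measure.support_mem_ae (μ := μ)] with x hx using h hx

lemma ae_mem_Icc_sInf_sSup_msupport {l u : ℝ} (h : msupport μ ⊆ Icc l u) :
    ∀ᵐ x ∂μ, x ∈ Icc (sInf (msupport μ)) (sSup (msupport μ)) :=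
  ae_mem_of_msupport_subset fun _ hx =>
    ⟨csInf_le ⟨l, fun _ hy => (h hy).1⟩ hx, le_csSup ⟨u, fun _ hy => (h hy).2⟩ hx⟩

lemma le_sSup_msupport [NeZero μ] {l u : ℝ} (h : msupport μ ⊆ Icc l u) :
    l ≤ sSup (msupport μ) := by
  obtain ⟨x, hx⟩ := msupport_eq_support μ ▸ Measure.nonempty_support (NeZero.ne μ)
  exact (h hx).1.trans (le_csSup ⟨u, fun _ hy => (h hy).2⟩ hx)

end Support

section ParametricIntegral

variable {μ : Measure ℝ} {C τ a : ℝ}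

lemma hasDerivAt_integral_div_sub [IsFiniteMeasure μ] (hμ : ∀ᵐ t ∂μ, |t| ≤ C ∧ t ≤ τ)
    (ha : τ < a) :
    HasDerivAt (fun b => ∫ t, t / (b - t) ∂μ) (∫ t, -(t / (a - t) ^ 2) ∂μ) a := by
  set ε := (a - τ) / 2
  have hε : 0 < ε := by simp only [ε]; linarith
  have hball : ∀ᵐ t ∂μ, ∀ x ∈ Metric.ball a ε, ε < x - t ∧ |t| ≤ C := by
    filter_upwards [hμ] with t ht x hx
    rw [Metric.mem_ball, Real.dist_eq, abs_lt] at hx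
    exact ⟨by simp only [ε] at hx ⊢; linarith [ht.2], ht.1⟩
  refine (hasDerivAt_integral_of_dominated_loc_of_deriv_le (F := fun x t => t / (x - t))
    (F' := fun x t => -(t / (x - t) ^ 2)) (bound := fun _ => C / ε ^ 2)
    (Metric.ball_mem_nhds a hε)
    (.of_forall fun x => (by fun_prop : Measurable _).aestronglyMeasurable) ?_
    (by fun_prop : Measurable _).aestronglyMeasurable ?_ (integrable_const _) ?_).2
  · refine Integrable.of_bound (by fun_prop : Measurable _).aestronglyMeasurable (C / ε) ?_
    filter_upwards [hball] with t ht
    obtain ⟨hεt, hCt⟩ := ht a (Metric.mem_ball_self hε)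
    rw [Real.norm_eq_abs, abs_div, abs_of_pos (hε.trans hεt)]
    exact div_le_div₀ ((abs_nonneg t).trans hCt) hCt hε hεt.le
  · filter_upwards [hball] with t ht x hx
    obtain ⟨hεt, hCt⟩ := ht x hx
    rw [norm_neg, Real.norm_eq_abs, abs_div, abs_of_pos (pow_pos (hε.trans hεt) 2)]
    exact div_le_div₀ ((abs_nonneg t).trans hCt) hCt (by positivity)
      (pow_le_pow_left₀ hε.le hεt.le 2)
  · filter_upwards [hball] with t ht x hx
    have hne : x - t ≠ 0 := (hε.trans (ht x hx).1).ne'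
    exact ((hasDerivAt_const x t).div ((hasDerivAt_id' x).sub_const t) hne).congr_deriv (by ring)

lemma abs_integral_div_sub_le [IsProbabilityMeasure μ] (hμ : ∀ᵐ t ∂μ, |t| ≤ C ∧ t ≤ τ)
    (ha : τ < a) : |∫ t, t / (a - t) ∂μ| ≤ C / (a - τ) := by
  simpa using norm_integral_le_of_norm_le_const (μ := μ) (f := fun t => t / (a - t))
    (C := C / (a - τ)) (by
      filter_upwards [hμ] with t ht
      rw [Real.norm_eq_abs, abs_div, abs_of_pos (show 0 < a - t by linarith [ht.2])]
      exact div_le_div₀ ((abs_nonneg t).trans ht.1) ht.1 (by linarith) (by linarith [ht.2]))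

lemma abs_integral_div_sub_sq_le [IsProbabilityMeasure μ] (hμ : ∀ᵐ t ∂μ, |t| ≤ C ∧ t ≤ τ)
    (ha : τ < a) : |∫ t, -(t / (a - t) ^ 2) ∂μ| ≤ C / (a - τ) ^ 2 := by
  simpa using norm_integral_le_of_norm_le_const (μ := μ) (f := fun t => -(t / (a - t) ^ 2))
    (C := C / (a - τ) ^ 2) (by
      filter_upwards [hμ] with t ht
      have hat : 0 < a - t := by linarith [ht.2]
      rw [norm_neg, Real.norm_eq_abs, abs_div, abs_of_pos (pow_pos hat 2)]
      exact div_le_div₀ ((abs_nonneg t).trans ht.1) ht.1 (by positivity)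
        (pow_le_pow_left₀ (by linarith) (by linarith [ht.2]) 2))

end ParametricIntegral

lemma integral_pos_of_ae_pos {α : Type*} [MeasurableSpace α] {μ : Measure α} [NeZero μ]
    {f : α → ℝ} (hf : Integrable f μ) (h : ∀ᵐ x ∂μ, 0 < f x) : 0 < ∫ x, f x ∂μ := by
  have hsupp : Function.support f =ᵐ[μ] (univ : Set α) :=
    ae_eq_univ.mpr (mem_ae_iff.mp (h.mono fun _ hx => hx.ne'))
  rw [integral_pos_iff_support_of_nonneg_ae (h.mono fun _ hx => hx.le) hf, measure_congr hsupp]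
  exact Measure.measure_univ_pos.mpr (NeZero.ne μ)

lemma abs_pow_div_mul_le {s u p q ε ε' : ℝ} (hs : s ∈ Icc 0 u) (hε : 0 < ε) (hε' : 0 < ε')
    (hp : ε ≤ p) (hq : ε' ≤ q) (k : ℕ) : |s ^ k / (p * q)| ≤ u ^ k / (ε * ε') := by
  have hpq : ε * ε' ≤ p * q := mul_le_mul hp hq hε'.le (hε.trans_le hp).le
  rw [abs_of_nonneg (div_nonneg (pow_nonneg hs.1 k) ((mul_pos hε hε').trans_le hpq).le)]
  exact div_le_div₀ (pow_nonneg (hs.1.trans hs.2) k) (pow_le_pow_left₀ hs.1 hs.2 k)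
    (mul_pos hε hε') hpq

/-- Compares two solutions `(x, y)`, `(x', y')` of `∫ s / (x - y s) dμ(s) = const`. -/
def pairMoment (μ : Measure ℝ) (k : ℕ) (x y x' y' : ℝ) : ℝ :=
  ∫ s, s ^ k / ((x - y * s) * (x' - y' * s)) ∂μ

/-- The mean of `s` under the tilted measure `s (x - y s)⁻² dμ(s)`. -/
def tiltedMean (μ : Measure ℝ) (x y : ℝ) : ℝ :=
  pairMoment μ 2 x y x y / pairMoment μ 1 x y x y

section PairMoment

variable {μ : Measure ℝ} [IsFiniteMeasure μ] {u ε ε' x y x' y' : ℝ}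

lemma integrable_div_sub_mul (hμ : ∀ᵐ s ∂μ, s ∈ Icc 0 u) (hε : 0 < ε)
    (h : ∀ᵐ s ∂μ, ε ≤ x - y * s) : Integrable (fun s => s / (x - y * s)) μ := by
  refine Integrable.of_bound (by fun_prop : Measurable _).aestronglyMeasurable (u / ε) ?_
  filter_upwards [hμ, h] with s hs hsε
  rw [Real.norm_eq_abs]
  simpa only [pow_one, mul_one] using abs_pow_div_mul_le hs hε one_pos hsε le_rfl 1

lemma integrable_pow_div_mul (hμ : ∀ᵐ s ∂μ, s ∈ Icc 0 u) (hε : 0 < ε) (hε' : 0 < ε')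
    (h : ∀ᵐ s ∂μ, ε ≤ x - y * s) (h' : ∀ᵐ s ∂μ, ε' ≤ x' - y' * s) (k : ℕ) :
    Integrable (fun s => s ^ k / ((x - y * s) * (x' - y' * s))) μ := by
  refine Integrable.of_bound (by fun_prop : Measurable _).aestronglyMeasurable
    (u ^ k / (ε * ε')) ?_
  filter_upwards [hμ, h, h'] with s hs hsε hsε'
  exact abs_pow_div_mul_le hs hε hε' hsε hsε' k

variable (hμ : ∀ᵐ s ∂μ, s ∈ Icc 0 u) (hε : 0 < ε) (hε' : 0 < ε')
  (h : ∀ᵐ s ∂μ, ε ≤ x - y * s) (h' : ∀ᵐ s ∂μ, ε' ≤ x' - y' * s)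
include hμ hε hε' h h'

lemma pairMoment_identity
    (heq : ∫ s, s / (x - y * s) ∂μ = ∫ s, s / (x' - y' * s) ∂μ) :
    (x' - x) * pairMoment μ 1 x y x' y' = (y' - y) * pairMoment μ 2 x y x' y' := by
  have hdiff : (fun s => s / (x - y * s) - s / (x' - y' * s)) =ᵐ[μ] fun s =>
      (x' - x) * (s ^ 1 / ((x - y * s) * (x' - y' * s))) -
        (y' - y) * (s ^ 2 / ((x - y * s) * (x' - y' * s))) := by
    filter_upwards [h, h'] with s hs hs'
    rw [div_sub_div _ _ (hε.trans_le hs).ne' (hε'.trans_le hs').ne', mul_div_assoc',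
      mul_div_assoc', ← sub_div]
    ring
  have hzero := integral_congr_ae hdiff
  rw [integral_sub (integrable_div_sub_mul hμ hε h) (integrable_div_sub_mul hμ hε' h'), heq,
    sub_self, integral_sub ((integrable_pow_div_mul hμ hε hε' h h' 1).const_mul _)
      ((integrable_pow_div_mul hμ hε hε' h h' 2).const_mul _),
    integral_const_mul, integral_const_mul] at hzero
  unfold pairMoment
  linarith

omit [IsFiniteMeasure μ] in
lemma pairMoment_nonneg (k : ℕ) : 0 ≤ pairMoment μ k x y x' y' := by
  refine integral_nonneg_of_ae ?_
  filter_upwards [hμ, h, h'] with s hs hsε hsε'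
  exact div_nonneg (pow_nonneg hs.1 k) (mul_nonneg (hε.trans_le hsε).le (hε'.trans_le hsε').le)

lemma pairMoment_two_le : pairMoment μ 2 x y x' y' ≤ u * pairMoment μ 1 x y x' y' := by
  rw [pairMoment, pairMoment, ← integral_const_mul]
  refine integral_mono_ae (integrable_pow_div_mul hμ hε hε' h h' 2)
    ((integrable_pow_div_mul hμ hε hε' h h' 1).const_mul u) ?_
  filter_upwards [hμ, h, h'] with s hs hsε hsε'
  rw [← mul_div_assoc]
  refine div_le_div_of_nonneg_right ?_ (mul_nonneg (hε.trans_le hsε).le (hε'.trans_le hsε').le)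
  nlinarith [hs.1, hs.2]

omit hμ in
lemma pairMoment_one_pos [NeZero μ] (hμ : ∀ᵐ s ∂μ, s ∈ Ioc 0 u) :
    0 < pairMoment μ 1 x y x' y' := by
  refine integral_pos_of_ae_pos (integrable_pow_div_mul
    (hμ.mono fun _ hs => Ioc_subset_Icc_self hs) hε hε' h h' 1) ?_
  filter_upwards [hμ, h, h'] with s hs hsε hsε'
  exact div_pos (pow_pos hs.1 1) (mul_pos (hε.trans_le hsε) (hε'.trans_le hsε'))

end PairMoment

section ImplicitEquation

variable {μ : Measure ℝ} [IsFiniteMeasure μ] [NeZero μ] {u ε ε' x y x' y' : ℝ}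

lemma abs_sub_le_of_integral_div_sub_mul_eq (hμ : ∀ᵐ s ∂μ, s ∈ Ioc 0 u) (hε : 0 < ε)
    (hε' : 0 < ε') (h : ∀ᵐ s ∂μ, ε ≤ x - y * s) (h' : ∀ᵐ s ∂μ, ε' ≤ x' - y' * s)
    (heq : ∫ s, s / (x - y * s) ∂μ = ∫ s, s / (x' - y' * s) ∂μ) :
    |x' - x| ≤ u * |y' - y| := by
  have hμ' : ∀ᵐ s ∂μ, s ∈ Icc 0 u := hμ.mono fun _ hs => Ioc_subset_Icc_self hs
  have hP₁ := pairMoment_one_pos hε hε' h h' hμ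
  have hid := congrArg abs (pairMoment_identity hμ' hε hε' h h' heq)
  rw [abs_mul, abs_mul, abs_of_pos hP₁,
    abs_of_nonneg (pairMoment_nonneg hμ' hε hε' h h' 2)] at hid
  refine le_of_mul_le_mul_right ?_ hP₁
  calc |x' - x| * pairMoment μ 1 x y x' y'
      = |y' - y| * pairMoment μ 2 x y x' y' := hid
    _ ≤ |y' - y| * (u * pairMoment μ 1 x y x' y') :=
      mul_le_mul_of_nonneg_left (pairMoment_two_le hμ' hε hε' h h') (abs_nonneg _)
    _ = u * |y' - y| * pairMoment μ 1 x y x' y' := by ring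

lemma tiltedMean_mem_Icc (hμ : ∀ᵐ s ∂μ, s ∈ Ioc 0 u) (hε : 0 < ε)
    (h : ∀ᵐ s ∂μ, ε ≤ x - y * s) : tiltedMean μ x y ∈ Icc 0 u := by
  have hμ' : ∀ᵐ s ∂μ, s ∈ Icc 0 u := hμ.mono fun _ hs => Ioc_subset_Icc_self hs
  have hP₁ := pairMoment_one_pos hε hε h h hμ
  obtain ⟨s, hs⟩ := hμ'.exists
  exact ⟨div_nonneg (pairMoment_nonneg hμ' hε hε h h 2) hP₁.le,
    div_le_of_le_mul₀ hP₁.le (hs.1.trans hs.2) (pairMoment_two_le hμ' hε hε h h)⟩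

end ImplicitEquation

section ImplicitDerivative

variable {μ : Measure ℝ} {u ε x y : ℝ}

lemma eventually_ae_half_le_sub_mul {ι : Type*} {l : Filter ι} {g c : ι → ℝ}
    (hμ : ∀ᵐ s ∂μ, s ∈ Icc 0 u) (hε : 0 < ε) (h : ∀ᵐ s ∂μ, ε ≤ x - y * s)
    (hg : Tendsto g l (𝓝 x)) (hc : Tendsto c l (𝓝 y)) :
    ∀ᶠ i in l, ∀ᵐ s ∂μ, ε / 2 ≤ g i - c i * s := by
  have hlim : Tendsto (fun i => |g i - x| + |c i - y| * u) l (𝓝 0) := by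
    simpa using (hg.sub_const x).abs.add ((hc.sub_const y).abs.mul_const u)
  filter_upwards [hlim.eventually (gt_mem_nhds (half_pos hε))] with i hi
  filter_upwards [hμ, h] with s hs hsε
  have hgx : -(g i - x) ≤ |g i - x| := neg_le_abs _
  have hcy : (c i - y) * s ≤ |c i - y| * u :=
    (mul_le_mul_of_nonneg_right (le_abs_self _) hs.1).trans
      (mul_le_mul_of_nonneg_left hs.2 (abs_nonneg _))
  linarith

lemma tendsto_pairMoment [IsFiniteMeasure μ] {ι : Type*} {l : Filter ι} [l.IsCountablyGenerated]
    {g c : ι → ℝ}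
    (hμ : ∀ᵐ s ∂μ, s ∈ Icc 0 u) (hε : 0 < ε) (h : ∀ᵐ s ∂μ, ε ≤ x - y * s)
    (hg : Tendsto g l (𝓝 x)) (hc : Tendsto c l (𝓝 y)) (k : ℕ) :
    Tendsto (fun i => pairMoment μ k x y (g i) (c i)) l (𝓝 (pairMoment μ k x y x y)) := by
  refine tendsto_integral_filter_of_dominated_convergence (fun _ => u ^ k / (ε * (ε / 2)))
    (.of_forall fun _ => (by fun_prop : Measurable _).aestronglyMeasurable) ?_
    (integrable_const _) ?_
  · filter_upwards [eventually_ae_half_le_sub_mul hμ hε h hg hc] with i hi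
    filter_upwards [hμ, h, hi] with s hs hsε hsi
    exact abs_pow_div_mul_le hs hε (half_pos hε) hsε hsi k
  · filter_upwards [h] with s hs
    have hpos : 0 < (x - y * s) * (x - y * s) := mul_pos (hε.trans_le hs) (hε.trans_le hs)
    exact tendsto_const_nhds.div (tendsto_const_nhds.mul (hg.sub (hc.mul_const s))) hpos.ne'

theorem hasDerivAt_of_integral_div_sub_mul_eq [IsFiniteMeasure μ] [NeZero μ] {g c : ℝ → ℝ}
    {U : Set ℝ} {a₀ k c' : ℝ} (hμ : ∀ᵐ s ∂μ, s ∈ Ioc 0 u) (hU : U ∈ 𝓝 a₀)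
    (hgap : ∀ a ∈ U, ∃ ε > 0, ∀ᵐ s ∂μ, ε ≤ g a - c a * s)
    (heq : ∀ a ∈ U, ∫ s, s / (g a - c a * s) ∂μ = k) (hc : HasDerivAt c c' a₀) :
    HasDerivAt g (c' * tiltedMean μ (g a₀) (c a₀)) a₀ := by
  have hμ' : ∀ᵐ s ∂μ, s ∈ Icc 0 u := hμ.mono fun _ hs => Ioc_subset_Icc_self hs
  obtain ⟨ε₀, hε₀, h₀⟩ := hgap a₀ (mem_of_mem_nhds hU)
  have heq₀ : ∀ a ∈ U, ∫ s, s / (g a₀ - c a₀ * s) ∂μ = ∫ s, s / (g a - c a * s) ∂μ :=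
    fun a ha => (heq a₀ (mem_of_mem_nhds hU)).trans (heq a ha).symm
  set P : ℕ → ℝ → ℝ := fun j a => pairMoment μ j (g a₀) (c a₀) (g a) (c a)
  have hg : Tendsto g (𝓝 a₀) (𝓝 (g a₀)) := by
    refine tendsto_iff_dist_tendsto_zero.mpr
      (squeeze_zero' (.of_forall fun _ => dist_nonneg) (g := fun a => u * |c a - c a₀|)
        ?_ ?_)
    · filter_upwards [hU] with a ha
      obtain ⟨ε, hε, h⟩ := hgap a ha
      exact abs_sub_le_of_integral_div_sub_mul_eq hμ hε₀ hε h₀ h (heq₀ a ha)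
    · simpa using (hc.continuousAt.tendsto.sub_const (c a₀)).abs.const_mul u
  have hP : ∀ j, Tendsto (P j) (𝓝 a₀) (𝓝 (P j a₀)) :=
    tendsto_pairMoment hμ' hε₀ h₀ hg hc.continuousAt.tendsto
  have hslope : ∀ᶠ a in 𝓝[≠] a₀, slope c a₀ a * (P 2 a / P 1 a) = slope g a₀ a := by
    filter_upwards [nhdsWithin_le_nhds hU] with a ha
    obtain ⟨ε, hε, h⟩ := hgap a ha
    have hid := pairMoment_identity hμ' hε₀ hε h₀ h (heq₀ a ha)
    rw [slope_def_field, slope_def_field, div_mul_div_comm, ← hid,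
      mul_div_mul_right _ _ (pairMoment_one_pos hε₀ hε h₀ h hμ).ne']
  rw [hasDerivAt_iff_tendsto_slope]
  refine ((hasDerivAt_iff_tendsto_slope.mp hc).mul ?_).congr' hslope
  exact ((hP 2).div (hP 1) (pairMoment_one_pos hε₀ hε₀ h₀ h₀ hμ).ne').mono_left
    nhdsWithin_le_nhds

end ImplicitDerivative

lemma tendsto_sub_inv_atTop (τ : ℝ) : Tendsto (fun a : ℝ => (a - τ)⁻¹) atTop (𝓝 0) :=
  tendsto_inv_atTop_zero.comp
    (by simpa [sub_eq_add_neg] using tendsto_atTop_add_const_right atTop (-τ) tendsto_id)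

lemma tendsto_div_sub_sq_atTop (τ : ℝ) : Tendsto (fun a : ℝ => a / (a - τ) ^ 2) atTop (𝓝 0) := by
  have hinv := tendsto_sub_inv_atTop τ
  have hsum := hinv.add ((hinv.pow 2).const_mul τ)
  rw [zero_pow two_ne_zero, mul_zero, add_zero] at hsum
  refine hsum.congr' ?_
  filter_upwards [eventually_gt_atTop τ] with a ha
  have : a - τ ≠ 0 := sub_ne_zero.mpr ha.ne'
  field_simp
  ring

lemma exists_isLocalMin_Ioi_of_tendsto_atTop {f : ℝ → ℝ} {a : ℝ} (hf : ContinuousOn f (Ioi a))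
    (hleft : Tendsto f (𝓝[>] a) atTop) (hright : Tendsto f atTop atTop) :
    ∃ c, a < c ∧ IsLocalMin f c := by
  obtain ⟨b, hab, hb⟩ := (nhdsGT_basis a).eventually_iff.mp
    (hleft.eventually_gt_atTop (f (a + 1)))
  obtain ⟨N, hN⟩ := eventually_atTop.mp (hright.eventually_gt_atTop (f (a + 1)))
  set p := (a + min b (a + 1)) / 2
  set q := max N (a + 1)
  have hap : a < p := by have := lt_min hab (lt_add_one a); simp only [p]; linarith
  have hpb : p < b := by have := min_le_left b (a + 1); simp only [p]; linarith
  have hpq : p ≤ q := by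
    have := min_le_right b (a + 1); have := le_max_right N (a + 1); simp only [p, q]; linarith
  obtain ⟨c, hc, hmin⟩ := isCompact_Icc.exists_isMinOn (nonempty_Icc.mpr hpq)
    (hf.mono fun x hx => hap.trans_le hx.1)
  have hc_le : f c ≤ f (a + 1) := hmin ⟨by simp only [p]; linarith [min_le_right b (a + 1)],
    le_max_right N (a + 1)⟩
  have hglobal : IsMinOn f (Ioi a) c := fun x (hx : a < x) => by
    rcases lt_or_ge x p with hxp | hpx
    · exact hc_le.trans (hb ⟨hx, hxp.trans hpb⟩).le
    rcases le_or_gt x q with hxq | hqx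
    · exact hmin ⟨hpx, hxq⟩
    · exact hc_le.trans (hN x ((le_max_left N _).trans hqx.le)).le
  exact ⟨c, hap.trans_le hc.1, hglobal.isLocalMin (Ioi_mem_nhds (hap.trans_le hc.1))⟩

namespace RMT

variable {R : RMT} {γ : ℝ → ℝ} {u a : ℝ}

lemma Basic.exists_ae_abs_le_and_le_tauT (hB : R.Basic) :
    ∃ C, ∀ᵐ t ∂ R.muT, |t| ≤ C ∧ t ≤ R.tauT := by
  obtain ⟨C, hC⟩ := hB.2.2.2.1
  exact ⟨C, ae_mem_of_msupport_subset (s := {t | |t| ≤ C ∧ t ≤ R.tauT}) fun t ht =>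
    ⟨abs_le.mpr (hC ht), le_csSup ⟨C, fun _ hy => (hC hy).2⟩ ht⟩⟩

lemma Basic.exists_ae_mem_Ioc (hB : R.Basic) : ∃ u, ∀ᵐ s ∂ R.muS, s ∈ Ioc 0 u := by
  obtain ⟨l, u, hl, h⟩ := hB.2.2.2.2.1
  exact ⟨u, ae_mem_of_msupport_subset fun s hs => ⟨hl.trans_le (h hs).1, (h hs).2⟩⟩

lemma Basic.cfun_mul_le_sfun (hB : R.Basic) (a : ℝ) : ∀ᵐ s ∂ R.muS, R.cfun a * s ≤ R.sfun a := by
  obtain ⟨l, u, -, h⟩ := hB.2.2.2.2.1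
  filter_upwards [ae_mem_Icc_sInf_sSup_msupport h] with s hs
  rw [RMT.sfun]
  split_ifs with hpos hneg
  · exact mul_le_mul_of_nonneg_left hs.2 hpos.le
  · exact mul_le_mul_of_nonpos_left hs.1 hneg.le
  · simp [le_antisymm (not_lt.mp hpos) (not_lt.mp hneg)]

lemma Basic.sSig_pos (hB : R.Basic) : 0 < R.sSig := by
  obtain ⟨l, u, hl, h⟩ := hB.2.2.2.2.1
  have : IsProbabilityMeasure R.muS := hB.2.2.1
  exact hl.trans_le (le_sSup_msupport h)

lemma Basic.meanS_pos (hB : R.Basic) : 0 < R.meanS := by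
  obtain ⟨u, hu⟩ := hB.exists_ae_mem_Ioc
  have : IsProbabilityMeasure R.muS := hB.2.2.1
  refine integral_pos_of_ae_pos (Integrable.of_bound aestronglyMeasurable_id u ?_)
    (hu.mono fun _ hs => hs.1)
  filter_upwards [hu] with s hs
  rw [Real.norm_eq_abs, abs_of_pos hs.1]
  exact hs.2

lemma IsGammaFun.exists_gap (hγ : R.IsGammaFun γ) (hB : R.Basic) (ha : R.tauT < a) :
    ∃ ε > 0, ∀ᵐ s ∂ R.muS, ε ≤ γ a - R.cfun a * s := by
  refine ⟨γ a - R.sfun a, sub_pos.mpr (hγ a ha).1, ?_⟩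
  filter_upwards [hB.cfun_mul_le_sfun a] with s hs
  linarith

lemma IsGammaFun.integral_eq (hγ : R.IsGammaFun γ) (hδ : R.delta ≠ 0) (ha : R.tauT < a) :
    ∫ s, s / (γ a - R.cfun a * s) ∂ R.muS = R.delta := by
  have h := (hγ a ha).2.1
  rw [one_div, eq_comm, inv_mul_eq_one₀ hδ] at h
  exact h.symm

lemma IsGammaFun.abs_sub_le (hγ : R.IsGammaFun γ) (hB : R.Basic)
    (hu : ∀ᵐ s ∂ R.muS, s ∈ Ioc 0 u) (ha : R.tauT < a) :
    |γ a - R.meanS / R.delta| ≤ u * |R.cfun a| := by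
  have : IsProbabilityMeasure R.muS := hB.2.2.1
  obtain ⟨ε, hε, h⟩ := hγ.exists_gap hB ha
  -- `(meanS / δ, 0)` solves the defining equation of `γ` with `c = 0`.
  have hmean : ∫ s, s / (R.meanS / R.delta - 0 * s) ∂ R.muS = R.delta := by
    simp only [zero_mul, sub_zero, integral_div]
    exact div_div_cancel₀ hB.meanS_pos.ne'
  simpa using abs_sub_le_of_integral_div_sub_mul_eq hu (div_pos hB.meanS_pos hB.1) hε
    (.of_forall fun s => by simp) h (hmean.trans (hγ.integral_eq hB.1.ne' ha).symm)

lemma IsGammaFun.tendsto_atTop (hγ : R.IsGammaFun γ) (hB : R.Basic) :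
    Tendsto γ atTop (𝓝 (R.meanS / R.delta)) := by
  obtain ⟨C, hC⟩ := hB.exists_ae_abs_le_and_le_tauT
  obtain ⟨u, hu⟩ := hB.exists_ae_mem_Ioc
  have : IsProbabilityMeasure R.muT := hB.2.1
  have : IsProbabilityMeasure R.muS := hB.2.2.1
  have hu₀ : 0 ≤ u := by obtain ⟨s, hs⟩ := hu.exists; exact hs.1.le.trans hs.2
  have hbound : Tendsto (fun a => u * (C / (a - R.tauT))) atTop (𝓝 0) := by
    simpa [div_eq_mul_inv] using ((tendsto_sub_inv_atTop R.tauT).const_mul C).const_mul u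
  refine tendsto_iff_dist_tendsto_zero.mpr
    (squeeze_zero' (.of_forall fun _ => dist_nonneg) ?_ hbound)
  filter_upwards [eventually_gt_atTop R.tauT] with a ha
  calc dist (γ a) (R.meanS / R.delta) ≤ u * |R.cfun a| := hγ.abs_sub_le hB hu ha
    _ ≤ u * (C / (a - R.tauT)) :=
      mul_le_mul_of_nonneg_left (abs_integral_div_sub_le hC ha) hu₀

lemma IsGammaFun.hasDerivAt (hγ : R.IsGammaFun γ) (hB : R.Basic) (ha : R.tauT < a) :
    HasDerivAt γ ((∫ t, -(t / (a - t) ^ 2) ∂ R.muT) * tiltedMean R.muS (γ a) (R.cfun a)) a := by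
  obtain ⟨C, hC⟩ := hB.exists_ae_abs_le_and_le_tauT
  obtain ⟨u, hu⟩ := hB.exists_ae_mem_Ioc
  have : IsProbabilityMeasure R.muT := hB.2.1
  have : IsProbabilityMeasure R.muS := hB.2.2.1
  exact hasDerivAt_of_integral_div_sub_mul_eq hu (Ioi_mem_nhds ha)
    (fun b hb => hγ.exists_gap hB hb) (fun b hb => hγ.integral_eq hB.1.ne' hb)
    (hasDerivAt_integral_div_sub hC ha)

lemma IsGammaFun.hasDerivAt_psifun (hγ : R.IsGammaFun γ) (hB : R.Basic) (ha : R.tauT < a) :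
    HasDerivAt (psifun γ)
      (γ a + a * ((∫ t, -(t / (a - t) ^ 2) ∂ R.muT) * tiltedMean R.muS (γ a) (R.cfun a))) a :=
  ((hasDerivAt_id' a).mul (hγ.hasDerivAt hB ha)).congr_deriv (by rw [one_mul])

lemma IsGammaFun.tendsto_deriv_psifun (hγ : R.IsGammaFun γ) (hB : R.Basic) :
    Tendsto (deriv (psifun γ)) atTop (𝓝 (R.meanS / R.delta)) := by
  obtain ⟨C, hC⟩ := hB.exists_ae_abs_le_and_le_tauT
  obtain ⟨u, hu⟩ := hB.exists_ae_mem_Ioc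
  have : IsProbabilityMeasure R.muT := hB.2.1
  have : IsProbabilityMeasure R.muS := hB.2.2.1
  have hrem : Tendsto (fun a => a * ((∫ t, -(t / (a - t) ^ 2) ∂ R.muT) *
      tiltedMean R.muS (γ a) (R.cfun a))) atTop (𝓝 0) := by
    refine squeeze_zero_norm' ?_
      (by simpa using (tendsto_div_sub_sq_atTop R.tauT).const_mul (C * u))
    filter_upwards [eventually_gt_atTop (max R.tauT 0)] with a ha
    have hτa : R.tauT < a := (le_max_left _ _).trans_lt ha
    obtain ⟨ε, hε, h⟩ := hγ.exists_gap hB hτa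
    obtain ⟨hq₀, hqu⟩ := tiltedMean_mem_Icc hu hε h
    have hc' := abs_integral_div_sub_sq_le hC hτa
    rw [Real.norm_eq_abs, abs_mul, abs_mul, abs_of_pos ((le_max_right _ _).trans_lt ha),
      abs_of_nonneg hq₀]
    calc a * (|∫ t, -(t / (a - t) ^ 2) ∂ R.muT| * tiltedMean R.muS (γ a) (R.cfun a))
        ≤ a * (C / (a - R.tauT) ^ 2 * u) := mul_le_mul_of_nonneg_left
          (mul_le_mul hc' hqu hq₀ ((abs_nonneg _).trans hc')) ((le_max_right _ _).trans ha.le)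
      _ = C * u * (a / (a - R.tauT) ^ 2) := by ring
  have hsum := (hγ.tendsto_atTop hB).add hrem
  rw [add_zero] at hsum
  refine hsum.congr' ?_
  filter_upwards [eventually_gt_atTop R.tauT] with a ha
  exact (hγ.hasDerivAt_psifun hB ha).deriv.symm

lemma IsGammaFun.tendsto_psifun_atTop (hγ : R.IsGammaFun γ) (hB : R.Basic) :
    Tendsto (psifun γ) atTop atTop :=
  tendsto_id.atTop_mul_pos (div_pos hB.meanS_pos hB.1) (hγ.tendsto_atTop hB)

lemma IsGammaFun.tendsto_psifun_nhdsGT (hγ : R.IsGammaFun γ) (hB : R.Basic)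
    (hc : Tendsto R.cfun (𝓝[>] R.tauT) atTop) : Tendsto (psifun γ) (𝓝[>] R.tauT) atTop := by
  have hτ : 0 < R.tauT := hB.2.2.2.2.2.2.2
  refine tendsto_atTop_mono' _ ?_ (hc.const_mul_atTop (mul_pos hτ hB.sSig_pos))
  filter_upwards [hc.eventually_gt_atTop 0, self_mem_nhdsWithin] with a hca (ha : R.tauT < a)
  have hγa : R.cfun a * R.sSig < γ a := by simpa [RMT.sfun, hca] using (hγ a ha).1
  have hγ₀ : 0 < γ a := (mul_pos hca hB.sSig_pos).trans hγa
  calc R.tauT * R.sSig * R.cfun a = R.tauT * (R.cfun a * R.sSig) := by ring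
    _ ≤ R.tauT * γ a := mul_le_mul_of_nonneg_left hγa.le hτ.le
    _ ≤ a * γ a := mul_le_mul_of_nonneg_right ha.le hγ₀.le

end RMT

/-- **Lemma (limits of `ψ` and `ψ'`).** Under the thick-edge assumptions:
`ψ'(a) → (∫ s dμ_Σ)/δ > 0` as `a → ∞`; `ψ(a) → ∞` as `a → ∞` and as
`a ↓ sup supp μ_T`; consequently the set of critical points of `ψ` in
`(sup supp μ_T, ∞)` is nonempty and bounded above. -/
theorem psi_limits_and_critical_points
    (R : RMT) (hB : R.Basic) (hTE : R.ThickEdge)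
    (γ : ℝ → ℝ) (hγ : R.IsGammaFun γ) :
    Tendsto (fun a => deriv (psifun γ) a) atTop (𝓝 (R.meanS / R.delta)) ∧
    0 < R.meanS / R.delta ∧
    Tendsto (psifun γ) atTop atTop ∧
    Tendsto (psifun γ) (𝓝[>] R.tauT) atTop ∧
    {a : ℝ | R.tauT < a ∧ deriv (psifun γ) a = 0}.Nonempty ∧
    BddAbove {a : ℝ | R.tauT < a ∧ deriv (psifun γ) a = 0} := by
  have hm : 0 < R.meanS / R.delta := div_pos hB.meanS_pos hB.1
  have hderiv := hγ.tendsto_deriv_psifun hB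
  have htop := hγ.tendsto_psifun_atTop hB
  have hedge := hγ.tendsto_psifun_nhdsGT hB hTE.1
  refine ⟨hderiv, hm, htop, hedge, ?_, ?_⟩
  · obtain ⟨c, hc, hmin⟩ := exists_isLocalMin_Ioi_of_tendsto_atTop
      (fun a ha => (hγ.hasDerivAt_psifun hB ha).continuousAt.continuousWithinAt) hedge htop
    exact ⟨c, hc, hmin.deriv_eq_zero⟩
  · obtain ⟨N, hN⟩ := eventually_atTop.mp (hderiv.eventually_const_lt hm)
    exact ⟨N, fun a ha => not_lt.mp fun hNa => (hN a hNa.le).ne' ha.2⟩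

end SpecGLM
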